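/- arXiv:funct-an/9712005 — 3 statements merged into one kernel-verified Lean document; each statement's English description precedes it below -/
import Mathlib

section
/- Fix a graded system of Hilbert spaces with product ∘, and take the weights w₀ = 1 and w_n = 1/n! for n ≥ 1. Then for all elements a, b of the algebra, ‖a ∘ b‖_w ≤ √3·‖a‖_w·‖b‖_w. -/
/-! A graded system of Hilbert spaces: a family `(E n)_{n ≥ 1}` of real inner product spaces
together with bilinear maps `mul p q : E p →ₗ E q →ₗ E (p+q)`.  An element of the associated
algebra is a pair `(a₀, (a n)_{n ≥ 1})` with `a₀ : ℝ`, `a n : E n`, all but finitely many `a n`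
zero (the component `a 0` is unused dead data).  -/

/-- The degree-`n` component (`n ≥ 1`) of the product of the elements `(a₀, a)` and `(b₀, b)`:
`c n = a₀ • b n + b₀ • a n + ∑_{p+q=n, p,q ≥ 1} a p ∘ b q`. -/
noncomputable def gradedMul {E : ℕ → Type*} [∀ n, NormedAddCommGroup (E n)]
    [∀ n, InnerProductSpace ℝ (E n)]
    (mul : ∀ p q : ℕ, E p →ₗ[ℝ] E q →ₗ[ℝ] E (p + q))
    (a₀ : ℝ) (a : ∀ n, E n) (b₀ : ℝ) (b : ∀ n, E n) (n : ℕ) : E n :=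
  a₀ • b n + b₀ • a n +
    ∑ p ∈ Finset.Ioo 0 n,
      if h : p + (n - p) = n then cast (congrArg E h) (mul p (n - p) (a p) (b (n - p))) else 0

/-- The weighted Hilbert norm `‖a‖_w = √(a₀² + ∑_{n ≥ 1} w n · ‖a n‖²)` (the weight `w 0 = 1`
of the scalar component is built in). -/
noncomputable def wnorm {E : ℕ → Type*} [∀ n, NormedAddCommGroup (E n)]
    (w : ℕ → ℝ) (a₀ : ℝ) (a : ∀ n, E n) : ℝ :=
  Real.sqrt (a₀ ^ 2 + ∑' n : ℕ, w (n + 1) * ‖a (n + 1)‖ ^ 2)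

/-! The `n`-th component of `a ∘ b` is bounded in norm by the Cauchy product
`∑_{p+q=n} |a_p| |b_q|` of the component norms (with `|a₀|`, `|b₀|` in degree `0`). Weighted
Cauchy–Schwarz then gives `w_n ‖(a ∘ b)_n‖² ≤ K ∑_{p+q=n} w_p |a_p|² w_q |b_q|²` as soon as
`∑_{p+q=n} w_n / (w_p w_q) ≤ K` for every `n`, and summing over `n` yields
`‖a ∘ b‖_w ≤ √K ‖a‖_w ‖b‖_w`. For `w_n = 1/n!` that sum is `∑_{p+q=n} p! q! / n! ≤ 3`, because
the two end terms are `1` and each of the `n - 1` inner ones is at most `1/n`. -/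

open Finset

theorem Finset.Nat.sum_antidiagonal_eq_add_add_sum_Ioo {M : Type*} [AddCommMonoid M]
    (f : ℕ → ℕ → M) {n : ℕ} (hn : 0 < n) :
    ∑ x ∈ antidiagonal n, f x.1 x.2 = f 0 n + f n 0 + ∑ p ∈ Ioo 0 n, f p (n - p) := by
  have hrange : range (n + 1) = insert 0 (insert n (Ioo 0 n)) := by
    ext p
    simp only [mem_range, mem_insert, mem_Ioo]
    omega
  rw [Finset.Nat.sum_antidiagonal_eq_sum_range_succ, Nat.succ_eq_add_one, hrange,
    sum_insert (by simp; omega), sum_insert (by simp), Nat.sub_zero, Nat.sub_self, add_assoc]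

section Factorial

open Nat

theorem Nat.add_mul_factorial_mul_factorial_le {p q : ℕ} (hp : 1 ≤ p) (hq : 1 ≤ q) :
    (p + q) * (p ! * q !) ≤ (p + q)! := by
  induction q, hq using Nat.le_induction with
  | base => rw [factorial_one, mul_one, ← factorial_succ]
  | succ q hq ih =>
    calc (p + (q + 1)) * (p ! * (q + 1)!)
        = (p + q + 1) * ((q + 1) * (p ! * q !)) := by rw [factorial_succ]; ring
      _ ≤ (p + q + 1) * ((p + q) * (p ! * q !)) :=
          Nat.mul_le_mul_left _ (Nat.mul_le_mul_right _ (by omega))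
      _ ≤ (p + q + 1) * (p + q)! := by gcongr
      _ = (p + (q + 1))! := by rw [← add_assoc, factorial_succ]

theorem Nat.sum_Ioo_factorial_mul_factorial_sub_le (n : ℕ) :
    ∑ p ∈ Ioo 0 n, p ! * (n - p)! ≤ n ! := by
  rcases Nat.eq_zero_or_pos n with rfl | hn
  · simp
  refine Nat.le_of_mul_le_mul_left ?_ hn
  calc n * ∑ p ∈ Ioo 0 n, p ! * (n - p)!
      = ∑ p ∈ Ioo 0 n, n * (p ! * (n - p)!) := mul_sum _ _ _
    _ ≤ ∑ _p ∈ Ioo 0 n, n ! := sum_le_sum fun p hp => by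
        obtain ⟨hp0, hpn⟩ := mem_Ioo.1 hp
        simpa only [Nat.add_sub_cancel' hpn.le] using
          add_mul_factorial_mul_factorial_le (p := p) (q := n - p) hp0 (by omega)
    _ = (n - 1) * n ! := by rw [sum_const, Nat.card_Ioo, smul_eq_mul, Nat.sub_zero]
    _ ≤ n * n ! := by gcongr; omega

theorem Nat.sum_antidiagonal_factorial_mul_factorial_le (n : ℕ) :
    ∑ x ∈ antidiagonal n, x.1 ! * x.2 ! ≤ 3 * n ! := by
  rcases Nat.eq_zero_or_pos n with rfl | hn
  · simp
  rw [Finset.Nat.sum_antidiagonal_eq_add_add_sum_Ioo (fun p q => p ! * q !) hn]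
  have := sum_Ioo_factorial_mul_factorial_sub_le n
  simp only [factorial_zero, one_mul, mul_one]
  omega

theorem sum_antidiagonal_inv_factorial_div_le (n : ℕ) :
    ∑ x ∈ antidiagonal n, (1 / (n ! : ℝ)) / (1 / (x.1 ! : ℝ) * (1 / (x.2 ! : ℝ))) ≤ 3 := by
  have hsum : (∑ x ∈ antidiagonal n, x.1 ! * x.2 ! : ℝ) ≤ 3 * n ! := by
    exact_mod_cast Nat.sum_antidiagonal_factorial_mul_factorial_le n
  calc ∑ x ∈ antidiagonal n, (1 / (n ! : ℝ)) / (1 / (x.1 ! : ℝ) * (1 / (x.2 ! : ℝ)))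
      = (∑ x ∈ antidiagonal n, x.1 ! * x.2 ! : ℝ) / n ! := by
        rw [sum_div]
        refine sum_congr rfl fun x _ => ?_
        field_simp
    _ ≤ 3 := by rw [div_le_iff₀ (by positivity)]; exact hsum

end Factorial

section WeightedCauchyProduct

variable {w A B C : ℕ → ℝ} {K : ℝ}

theorem mul_sq_le_mul_sum_antidiagonal {n : ℕ} (hw : ∀ n, 0 < w n)
    (hK : ∑ x ∈ antidiagonal n, w n / (w x.1 * w x.2) ≤ K) (hC₀ : 0 ≤ C n)
    (hC : C n ≤ ∑ x ∈ antidiagonal n, A x.1 * B x.2) :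
    w n * C n ^ 2 ≤ K * ∑ x ∈ antidiagonal n, w x.1 * A x.1 ^ 2 * (w x.2 * B x.2 ^ 2) := by
  have hw₀ : ∀ m, 0 ≤ w m := fun m => (hw m).le
  have hCS : (∑ x ∈ antidiagonal n, A x.1 * B x.2) ^ 2 ≤
      (∑ x ∈ antidiagonal n, 1 / (w x.1 * w x.2)) *
        ∑ x ∈ antidiagonal n, w x.1 * A x.1 ^ 2 * (w x.2 * B x.2 ^ 2) := by
    refine sum_sq_le_sum_mul_sum_of_sq_le_mul _ (fun x _ => ?_) (fun x _ => ?_) (fun x _ => ?_)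
    · have := hw₀ x.1; have := hw₀ x.2; positivity
    · have := hw₀ x.1; have := hw₀ x.2; positivity
    · have := (hw x.1).ne'; have := (hw x.2).ne'
      exact le_of_eq (by field_simp)
  have hrhs : 0 ≤ ∑ x ∈ antidiagonal n, w x.1 * A x.1 ^ 2 * (w x.2 * B x.2 ^ 2) :=
    sum_nonneg fun x _ => by have := hw₀ x.1; have := hw₀ x.2; positivity
  calc w n * C n ^ 2
      ≤ w n * ((∑ x ∈ antidiagonal n, 1 / (w x.1 * w x.2)) *
          ∑ x ∈ antidiagonal n, w x.1 * A x.1 ^ 2 * (w x.2 * B x.2 ^ 2)) := by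
        have := hw₀ n
        gcongr
        exact (pow_le_pow_left₀ hC₀ hC 2).trans hCS
    _ = (∑ x ∈ antidiagonal n, w n / (w x.1 * w x.2)) *
          ∑ x ∈ antidiagonal n, w x.1 * A x.1 ^ 2 * (w x.2 * B x.2 ^ 2) := by
        simp only [← mul_assoc, mul_sum, mul_one_div]
    _ ≤ K * ∑ x ∈ antidiagonal n, w x.1 * A x.1 ^ 2 * (w x.2 * B x.2 ^ 2) := by gcongr

theorem summable_sum_antidiagonal_mul_sq (hw : ∀ n, 0 < w n)
    (hA : Summable fun n => w n * A n ^ 2) (hB : Summable fun n => w n * B n ^ 2) :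
    Summable fun n => ∑ x ∈ antidiagonal n, w x.1 * A x.1 ^ 2 * (w x.2 * B x.2 ^ 2) :=
  summable_sum_mul_antidiagonal_of_summable_mul (f := fun n => w n * A n ^ 2)
    (g := fun n => w n * B n ^ 2) (hA.mul_of_nonneg hB
      (fun n => mul_nonneg (hw n).le (sq_nonneg (A n)))
      (fun n => mul_nonneg (hw n).le (sq_nonneg (B n))))

theorem summable_mul_sq_of_le_sum_antidiagonal (hw : ∀ n, 0 < w n)
    (hK : ∀ n, ∑ x ∈ antidiagonal n, w n / (w x.1 * w x.2) ≤ K) (hC₀ : ∀ n, 0 ≤ C n)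
    (hC : ∀ n, C n ≤ ∑ x ∈ antidiagonal n, A x.1 * B x.2)
    (hA : Summable fun n => w n * A n ^ 2) (hB : Summable fun n => w n * B n ^ 2) :
    Summable fun n => w n * C n ^ 2 :=
  ((summable_sum_antidiagonal_mul_sq hw hA hB).mul_left K).of_nonneg_of_le
    (fun n => mul_nonneg (hw n).le (sq_nonneg (C n)))
    fun n => mul_sq_le_mul_sum_antidiagonal hw (hK n) (hC₀ n) (hC n)

theorem tsum_mul_sq_le_of_le_sum_antidiagonal (hw : ∀ n, 0 < w n)
    (hK : ∀ n, ∑ x ∈ antidiagonal n, w n / (w x.1 * w x.2) ≤ K) (hC₀ : ∀ n, 0 ≤ C n)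
    (hC : ∀ n, C n ≤ ∑ x ∈ antidiagonal n, A x.1 * B x.2)
    (hA : Summable fun n => w n * A n ^ 2) (hB : Summable fun n => w n * B n ^ 2) :
    ∑' n, w n * C n ^ 2 ≤ K * ((∑' n, w n * A n ^ 2) * ∑' n, w n * B n ^ 2) := by
  rw [hA.tsum_mul_tsum_eq_tsum_sum_antidiagonal hB (hA.mul_of_nonneg hB
      (fun n => mul_nonneg (hw n).le (sq_nonneg (A n)))
      (fun n => mul_nonneg (hw n).le (sq_nonneg (B n)))), ← tsum_mul_left]
  exact Summable.tsum_le_tsum (fun n => mul_sq_le_mul_sum_antidiagonal hw (hK n) (hC₀ n) (hC n))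
    (summable_mul_sq_of_le_sum_antidiagonal hw hK hC₀ hC hA hB)
    ((summable_sum_antidiagonal_mul_sq hw hA hB).mul_left K)

end WeightedCauchyProduct

section GradedAlgebra

variable {E : ℕ → Type*} [∀ n, NormedAddCommGroup (E n)]

def componentNorm (a₀ : ℝ) (a : ∀ n, E n) : ℕ → ℝ
  | 0 => |a₀|
  | n + 1 => ‖a (n + 1)‖

theorem componentNorm_nonneg (a₀ : ℝ) (a : ∀ n, E n) (n : ℕ) : 0 ≤ componentNorm a₀ a n := by
  cases n <;> simp only [componentNorm] <;> positivity

theorem componentNorm_of_ne_zero (a₀ : ℝ) (a : ∀ n, E n) {n : ℕ} (hn : n ≠ 0) :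
    componentNorm a₀ a n = ‖a n‖ := by
  obtain ⟨m, rfl⟩ := Nat.exists_eq_succ_of_ne_zero hn
  rfl

theorem summable_mul_componentNorm_sq (w : ℕ → ℝ) (a₀ : ℝ) {a : ∀ n, E n}
    (ha : ∃ N, ∀ n, N ≤ n → a n = 0) :
    Summable fun n => w n * componentNorm a₀ a n ^ 2 := by
  obtain ⟨N, hN⟩ := ha
  refine summable_of_ne_finset_zero (s := range (N + 1)) fun n hn => ?_
  rw [mem_range, not_lt] at hn
  rw [componentNorm_of_ne_zero a₀ a (by omega), hN n (by omega), norm_zero]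
  ring

theorem wnorm_eq_sqrt_tsum {w : ℕ → ℝ} (hw₀ : w 0 = 1) {a₀ : ℝ} {a : ∀ n, E n}
    (hs : Summable fun n => w n * componentNorm a₀ a n ^ 2) :
    wnorm w a₀ a = √(∑' n, w n * componentNorm a₀ a n ^ 2) := by
  rw [hs.tsum_eq_zero_add, wnorm]
  simp only [componentNorm, hw₀, one_mul, sq_abs]

theorem norm_cast_congrArg {m n : ℕ} (h : m = n) (x : E m) :
    ‖cast (congrArg E h) x‖ = ‖x‖ := by
  subst h
  rfl

variable [∀ n, InnerProductSpace ℝ (E n)] {mul : ∀ p q : ℕ, E p →ₗ[ℝ] E q →ₗ[ℝ] E (p + q)}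

theorem componentNorm_gradedMul_le
    (hmul : ∀ p q : ℕ, 1 ≤ p → 1 ≤ q → ∀ (x : E p) (y : E q), ‖mul p q x y‖ ≤ ‖x‖ * ‖y‖)
    (a₀ : ℝ) (a : ∀ n, E n) (b₀ : ℝ) (b : ∀ n, E n) (n : ℕ) :
    componentNorm (a₀ * b₀) (gradedMul mul a₀ a b₀ b) n ≤
      ∑ x ∈ antidiagonal n, componentNorm a₀ a x.1 * componentNorm b₀ b x.2 := by
  rcases Nat.eq_zero_or_pos n with rfl | hn
  · simp [componentNorm, abs_mul]
  rw [Finset.Nat.sum_antidiagonal_eq_add_add_sum_Ioo (fun p q =>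
    componentNorm a₀ a p * componentNorm b₀ b q) hn]
  simp only [componentNorm_of_ne_zero _ _ hn.ne']
  have hconv : ∀ p ∈ Ioo 0 n,
      ‖if h : p + (n - p) = n then cast (congrArg E h) (mul p (n - p) (a p) (b (n - p)))
        else 0‖ ≤ componentNorm a₀ a p * componentNorm b₀ b (n - p) := fun p hp => by
    obtain ⟨hp0, hpn⟩ := mem_Ioo.1 hp
    have hsum : p + (n - p) = n := by omega
    rw [dif_pos hsum, norm_cast_congrArg hsum, componentNorm_of_ne_zero _ _ hp0.ne',
      componentNorm_of_ne_zero _ _ (by omega)]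
    exact hmul _ _ hp0 (by omega) _ _
  refine norm_add₃_le.trans (add_le_add (add_le_add ?_ ?_) ((norm_sum_le _ _).trans
    (sum_le_sum hconv)))
  · rw [norm_smul, Real.norm_eq_abs, componentNorm]
  · rw [norm_smul, Real.norm_eq_abs, componentNorm, mul_comm]

theorem wnorm_gradedMul_le {w : ℕ → ℝ} {K : ℝ} (hw₀ : w 0 = 1) (hw : ∀ n, 0 < w n)
    (hK : ∀ n, ∑ x ∈ antidiagonal n, w n / (w x.1 * w x.2) ≤ K)
    (hmul : ∀ p q : ℕ, 1 ≤ p → 1 ≤ q → ∀ (x : E p) (y : E q), ‖mul p q x y‖ ≤ ‖x‖ * ‖y‖)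
    {a₀ : ℝ} {a : ∀ n, E n} {b₀ : ℝ} {b : ∀ n, E n}
    (ha : Summable fun n => w n * componentNorm a₀ a n ^ 2)
    (hb : Summable fun n => w n * componentNorm b₀ b n ^ 2) :
    wnorm w (a₀ * b₀) (gradedMul mul a₀ a b₀ b) ≤ √K * wnorm w a₀ a * wnorm w b₀ b := by
  have hC := componentNorm_gradedMul_le hmul a₀ a b₀ b
  have hC₀ := componentNorm_nonneg (a₀ * b₀) (gradedMul mul a₀ a b₀ b)
  have hnonneg (D : ℕ → ℝ) : 0 ≤ ∑' n, w n * D n ^ 2 :=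
    tsum_nonneg fun n => mul_nonneg (hw n).le (sq_nonneg (D n))
  rw [wnorm_eq_sqrt_tsum hw₀ ha, wnorm_eq_sqrt_tsum hw₀ hb,
    wnorm_eq_sqrt_tsum hw₀ (summable_mul_sq_of_le_sum_antidiagonal hw hK hC₀ hC ha hb),
    mul_assoc, ← Real.sqrt_mul (hnonneg _),
    ← Real.sqrt_mul' _ (mul_nonneg (hnonneg _) (hnonneg _))]
  exact Real.sqrt_le_sqrt (tsum_mul_sq_le_of_le_sum_antidiagonal hw hK hC₀ hC ha hb)

end GradedAlgebra

/-- **Corollary 2, second weight family.** With the weights `w 0 = 1`, `w n = 1/n!` for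
`n ≥ 1`, the product of the algebra satisfies `‖a ∘ b‖ ≤ √3·‖a‖·‖b‖`. -/
theorem graded_norm_estimate_inv_factorial
    {E : ℕ → Type*} [∀ n, NormedAddCommGroup (E n)] [∀ n, InnerProductSpace ℝ (E n)]
    (mul : ∀ p q : ℕ, E p →ₗ[ℝ] E q →ₗ[ℝ] E (p + q))
    (hmul : ∀ p q : ℕ, 1 ≤ p → 1 ≤ q → ∀ (x : E p) (y : E q), ‖mul p q x y‖ ≤ ‖x‖ * ‖y‖)
    (a₀ : ℝ) (a : ∀ n, E n) (ha : ∃ N, ∀ n, N ≤ n → a n = 0)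
    (b₀ : ℝ) (b : ∀ n, E n) (hb : ∃ N, ∀ n, N ≤ n → b n = 0) :
    wnorm (fun n => 1 / (n.factorial : ℝ)) (a₀ * b₀) (gradedMul mul a₀ a b₀ b) ≤
      Real.sqrt 3 * wnorm (fun n => 1 / (n.factorial : ℝ)) a₀ a *
        wnorm (fun n => 1 / (n.factorial : ℝ)) b₀ b :=
  wnorm_gradedMul_le (by simp) (fun n => by positivity) sum_antidiagonal_inv_factorial_div_le hmul
    (summable_mul_componentNorm_sq _ a₀ ha) (summable_mul_componentNorm_sq _ b₀ hb)
end

section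
/- Let σ ≤ −1 and ρ, ρ', s, s' be real parameters with ρ < ρ'. Then there exists a constant δ > 0 such that for all integers p, q ≥ 1: (p + q − 1)·(p+q)!^σ·2^{ρ(p+q)}·(1 + p + q)^s ≤ δ·(p!)^σ·2^{ρ'p}·(1 + p)^{s'}·(q!)^σ·2^{ρ'q}·(1 + q)^{s'}. -/
/-!
Since `p! q! ∣ (p+q)!` and `σ ≤ 0`, the factorial factor of `w_{p+q}` is at most the product
of those of `w_p` and `w_q`; the powers `2^{ρ'p}·2^{ρ'q}` recombine exactly to `2^{ρ'(p+q)}`.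
What is left is a power of `1 + p + q` (which dominates `p + q - 1`, `(1+p)^{-s'}` and
`(1+q)^{-s'}`) against the exponential decay `2^{(ρ-ρ')(p+q)}`, and such a product is bounded.
-/

noncomputable def wgt (σ ρ s : ℝ) (n : ℕ) : ℝ :=
  ((n.factorial : ℝ)) ^ σ * (2 : ℝ) ^ (ρ * n) * (1 + (n : ℝ)) ^ s

open Filter

lemma factorial_add_rpow_le {σ : ℝ} (hσ : σ ≤ 0) (p q : ℕ) :
    ((p + q).factorial : ℝ) ^ σ ≤ (p.factorial : ℝ) ^ σ * (q.factorial : ℝ) ^ σ := by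
  have hle : (p.factorial : ℝ) * q.factorial ≤ (p + q).factorial := by
    exact_mod_cast Nat.le_of_dvd (p + q).factorial_pos
      (Nat.factorial_mul_factorial_dvd_factorial_add p q)
  rw [← Real.mul_rpow (by positivity) (by positivity)]
  exact Real.rpow_le_rpow_of_nonpos (by positivity) hle hσ

lemma rpow_neg_abs_le_rpow {x y t : ℝ} (hx : 1 ≤ x) (hxy : x ≤ y) : y ^ (-|t|) ≤ x ^ t :=
  (Real.rpow_le_rpow_of_nonpos (by linarith) hxy (neg_nonpos.2 (abs_nonneg t))).trans
    (Real.rpow_le_rpow_of_exponent_le hx (neg_abs_le t))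

lemma sub_one_mul_one_add_rpow_le (s s' : ℝ) {x y : ℝ} (hx : 0 ≤ x) (hy : 0 ≤ y) :
    (x + y - 1) * (1 + (x + y)) ^ s ≤
      (1 + (x + y)) ^ (1 + |s| + 2 * |s'|) * ((1 + x) ^ s' * (1 + y) ^ s') := by
  set z := 1 + (x + y)
  have hz : 1 ≤ z := by linarith
  calc (x + y - 1) * z ^ s ≤ z ^ (1 : ℝ) * z ^ |s| := by
        rw [Real.rpow_one]
        exact mul_le_mul (by linarith) (Real.rpow_le_rpow_of_exponent_le hz (le_abs_self s))
          (by positivity) (by positivity)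
    _ = z ^ (1 + |s| + 2 * |s'|) * (z ^ (-|s'|) * z ^ (-|s'|)) := by
        simp only [← Real.rpow_add (by positivity : 0 < z)]
        ring_nf
    _ ≤ z ^ (1 + |s| + 2 * |s'|) * ((1 + x) ^ s' * (1 + y) ^ s') := by
        gcongr
        · exact rpow_neg_abs_le_rpow (by linarith) (by linarith)
        · exact rpow_neg_abs_le_rpow (by linarith) (by linarith)

lemma exists_one_add_rpow_mul_rpow_le (C : ℝ) {b a : ℝ} (hb : 1 < b) (ha : a < 0) :
    ∃ δ : ℝ, 0 < δ ∧ ∀ n : ℕ, (1 + (n : ℝ)) ^ C * b ^ (a * n) ≤ δ := by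
  set k := -(Real.log b * a)
  have hk : 0 < k := neg_pos.2 (mul_neg_of_pos_of_neg (Real.log_pos hb) ha)
  -- `b ^ (a n) = exp k * exp (-k (1 + n))` reduces the claim to `x ^ C * exp (-k x) → 0`.
  have hlim : Tendsto (fun n : ℕ => (1 + (n : ℝ)) ^ C * b ^ (a * n)) atTop (nhds 0) := by
    have h := ((tendsto_rpow_mul_exp_neg_mul_atTop_nhds_zero C k hk).comp
      (tendsto_atTop_add_const_left _ 1 tendsto_natCast_atTop_atTop)).const_mul (Real.exp k)
    rw [mul_zero] at h
    refine h.congr fun n => ?_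
    rw [Real.rpow_def_of_pos (zero_lt_one.trans hb), Function.comp_apply, mul_left_comm, ← Real.exp_add]
    congr 2
    ring
  obtain ⟨δ, hδ⟩ := hlim.bddAbove_range
  exact ⟨max δ 1, by positivity,
    fun n => (hδ (Set.mem_range_self n)).trans (le_max_left _ _)⟩

/-- Mixed multiplicative weight inequality for equal first parameter `σ ≤ -1` and `ρ < ρ'`:
for some constant `δ > 0`,
`(p+q-1)·w (p+q) (σ,ρ,s) ≤ δ·w p (σ,ρ',s')·w q (σ,ρ',s')` for all `p, q ≥ 1`. -/
theorem weight_inequality_mixed_rho (σ ρ ρ' s s' : ℝ) (hσ : σ ≤ -1) (hρ : ρ < ρ') :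
    ∃ δ : ℝ, 0 < δ ∧ ∀ p q : ℕ, 1 ≤ p → 1 ≤ q →
      ((p : ℝ) + q - 1) * wgt σ ρ s (p + q) ≤ δ * wgt σ ρ' s' p * wgt σ ρ' s' q := by
  obtain ⟨δ, hδ, hdecay⟩ :=
    exists_one_add_rpow_mul_rpow_le (1 + |s| + 2 * |s'|) one_lt_two (sub_neg.2 hρ)
  refine ⟨δ, hδ, fun p q _ _ => ?_⟩
  have hfact := factorial_add_rpow_le (hσ.trans (by norm_num)) p q
  have hpoly := sub_one_mul_one_add_rpow_le s s' p.cast_nonneg q.cast_nonneg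
  have hpow : (2 : ℝ) ^ (ρ * (p + q)) =
      2 ^ ((ρ - ρ') * (p + q)) * (2 ^ (ρ' * p) * 2 ^ (ρ' * q)) := by
    rw [← Real.rpow_add two_pos, ← Real.rpow_add two_pos]
    ring_nf
  have hsmall : ((p : ℝ) + q - 1) * (1 + (p + q)) ^ s * 2 ^ ((ρ - ρ') * (p + q)) ≤
      δ * ((1 + p) ^ s' * (1 + q) ^ s') := by
    have hdecay_pq := hdecay (p + q)
    push_cast at hdecay_pq
    refine (mul_le_mul_of_nonneg_right hpoly (by positivity)).trans ?_
    rw [mul_right_comm]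
    exact mul_le_mul_of_nonneg_right hdecay_pq (by positivity)
  unfold wgt
  push_cast
  calc _ = ((p : ℝ) + q - 1) * (1 + (p + q)) ^ s * 2 ^ ((ρ - ρ') * (p + q)) *
        (((p + q).factorial : ℝ) ^ σ * (2 ^ (ρ' * p) * 2 ^ (ρ' * q))) := by rw [hpow]; ring
    _ ≤ δ * ((1 + p) ^ s' * (1 + q) ^ s') *
        ((p.factorial : ℝ) ^ σ * (q.factorial : ℝ) ^ σ * (2 ^ (ρ' * p) * 2 ^ (ρ' * q))) :=
        mul_le_mul hsmall (by gcongr) (by positivity) (by positivity)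
    _ = _ := by ring
end

section
/- Fix a graded system of Hilbert spaces with product ∘. Let σ ≤ −1 and ρ, ρ', s, s' ∈ ℝ with ρ < ρ', and define two weight families u₀ = w₀ = 1, w_n = (n!)^σ·2^{ρn}·(1 + n)^s and u_n = (n!)^σ·2^{ρ'n}·(1 + n)^{s'} for n ≥ 1. Then there exists a constant γ > 0 such that for all elements a, b of the algebra, ‖a ∘ b‖_w ≤ γ·‖a‖_u·‖b‖_u. -/
private lemma cast_norm_eq' {E : ℕ → Type*} [∀ n, NormedAddCommGroup (E n)]
    {m n : ℕ} (h : m = n) (x : E m) : ‖cast (congrArg E h) x‖ = ‖x‖ := by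
  subst h; rfl

private lemma cast_zero_eq' {E : ℕ → Type*} [∀ n, NormedAddCommGroup (E n)]
    {m n : ℕ} (h : m = n) : cast (congrArg E h) (0 : E m) = 0 := by
  subst h; rfl

private lemma wgt_pos' (σ ρ s : ℝ) (n : ℕ) : 0 < wgt σ ρ s n := by
  have h1 : (0:ℝ) < (n.factorial : ℝ) := by exact_mod_cast n.factorial_pos
  have h2 : (0:ℝ) < 1 + (n:ℝ) := by positivity
  exact mul_pos (mul_pos (Real.rpow_pos_of_pos h1 _) (Real.rpow_pos_of_pos two_pos _))
    (Real.rpow_pos_of_pos h2 _)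

set_option maxHeartbeats 1000000

/-- Norm estimate (`n.11b`): for `σ ≤ -1` and `ρ < ρ'`, with the weight families
`w n = (n!)^σ·2^(ρn)·(1+n)^s` and `u n = (n!)^σ·2^(ρ'n)·(1+n)^s'` (`n ≥ 1`,
`w 0 = u 0 = 1`), there is a constant `γ > 0` such that the product of the algebra satisfies
`‖a ∘ b‖_w ≤ γ·‖a‖_u·‖b‖_u` for all elements `a`, `b`. -/
theorem graded_norm_estimate_mixed_rho
    {E : ℕ → Type*} [∀ n, NormedAddCommGroup (E n)] [∀ n, InnerProductSpace ℝ (E n)]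
    (mul : ∀ p q : ℕ, E p →ₗ[ℝ] E q →ₗ[ℝ] E (p + q))
    (hmul : ∀ p q : ℕ, 1 ≤ p → 1 ≤ q → ∀ (x : E p) (y : E q), ‖mul p q x y‖ ≤ ‖x‖ * ‖y‖)
    (σ ρ ρ' s s' : ℝ) (hσ : σ ≤ -1) (hρ : ρ < ρ') :
    ∃ γ : ℝ, 0 < γ ∧
      ∀ (a₀ : ℝ) (a : ∀ n, E n), (∃ N, ∀ n, N ≤ n → a n = 0) →
      ∀ (b₀ : ℝ) (b : ∀ n, E n), (∃ N, ∀ n, N ≤ n → b n = 0) →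
        wnorm (wgt σ ρ s) (a₀ * b₀) (gradedMul mul a₀ a b₀ b) ≤
          γ * wnorm (wgt σ ρ' s') a₀ a * wnorm (wgt σ ρ' s') b₀ b := by
  classical
  set w := wgt σ ρ s with hw
  set u := wgt σ ρ' s' with hu
  set M : ℝ := |s| + 2 * |s'| with hM
  set φ : ℕ → ℝ := fun n => (2:ℝ) ^ ((ρ - ρ') * (n:ℝ)) * (1 + (n:ℝ)) ^ M with hφ
  have hφpos : ∀ n, 0 < φ n := by
    intro n
    have h2 : (0:ℝ) < 1 + (n:ℝ) := by positivity
    exact mul_pos (Real.rpow_pos_of_pos two_pos _) (Real.rpow_pos_of_pos h2 _)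
  have hupos : ∀ n, 0 < u n := fun n => wgt_pos' _ _ _ n
  have hwpos : ∀ n, 0 < w n := fun n => wgt_pos' _ _ _ n
  -- summability of φ
  have hφsum : Summable φ := by
    have ht1 : (2:ℝ) ^ (ρ - ρ') < 1 :=
      Real.rpow_lt_one_of_one_lt_of_neg one_lt_two (by linarith)
    have ht0 : (0:ℝ) < (2:ℝ) ^ (ρ - ρ') := Real.rpow_pos_of_pos two_pos _
    set t := (2:ℝ) ^ (ρ - ρ') with htd
    set K := ⌈M⌉₊ with hK
    have h1 : Summable (fun n : ℕ => (n:ℝ)^K * t^n) :=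
      summable_pow_mul_geometric_of_norm_lt_one K (by rwa [Real.norm_eq_abs, abs_of_pos ht0])
    have h2 : Summable (fun n : ℕ => (((n+1):ℕ):ℝ)^K * t^(n+1)) :=
      (summable_nat_add_iff (f := fun n : ℕ => (n:ℝ)^K * t^n) 1).2 h1
    have h3 : Summable (fun n : ℕ => ((n:ℝ)+1)^K * t^n) := by
      have h4 := h2.mul_left t⁻¹
      refine h4.congr fun n => ?_
      push_cast
      rw [pow_succ]
      field_simp
    apply Summable.of_nonneg_of_le (fun n => (hφpos n).le) _ h3
    intro n
    have e1 : (2:ℝ) ^ ((ρ - ρ') * (n:ℝ)) = t^n := by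
      rw [htd, ← Real.rpow_natCast ((2:ℝ)^(ρ-ρ')) n, ← Real.rpow_mul (by norm_num)]
    have hMK : M ≤ (K:ℝ) := Nat.le_ceil M
    have hb1 : (1:ℝ) ≤ 1 + (n:ℝ) := le_add_of_nonneg_right (Nat.cast_nonneg n)
    have e2 : (1 + (n:ℝ)) ^ M ≤ (1 + (n:ℝ)) ^ (K:ℝ) :=
      Real.rpow_le_rpow_of_exponent_le hb1 hMK
    show (2:ℝ) ^ ((ρ - ρ') * (n:ℝ)) * (1 + (n:ℝ)) ^ M ≤ ((n:ℝ)+1)^K * t^n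
    calc (2:ℝ) ^ ((ρ - ρ') * (n:ℝ)) * (1 + (n:ℝ)) ^ M
        ≤ t^n * (1 + (n:ℝ)) ^ (K:ℝ) := by
          rw [e1]; exact mul_le_mul_of_nonneg_left e2 (by positivity)
      _ = ((n:ℝ)+1)^K * t^n := by rw [Real.rpow_natCast]; ring
  set Φ : ℝ := ∑' n, φ n with hΦ
  have hφleΦ : ∀ n, φ n ≤ Φ := fun n =>
    Summable.le_tsum hφsum n (fun i _ => (hφpos i).le)
  have hΦ1 : 1 ≤ Φ := by
    have h0 : φ 0 = 1 := by
      simp [hφ, Real.rpow_zero, Real.one_rpow]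
    simpa [h0] using hφleΦ 0
  have hΦpos : (0:ℝ) < Φ := lt_of_lt_of_le one_pos hΦ1
  -- key weight inequalities
  have haux : ∀ x y : ℝ, 1 ≤ x → x ≤ y → y ^ (-|s'|) ≤ x ^ s' := by
    intro x y hx hxy
    have hy : (1:ℝ) ≤ y := le_trans hx hxy
    rcases le_or_gt 0 s' with h | h
    · have h1 : y ^ (-|s'|) ≤ 1 :=
        Real.rpow_le_one_of_one_le_of_nonpos hy (by rw [abs_of_nonneg h]; linarith)
      have h2 : (1:ℝ) ≤ x ^ s' := by
        have := Real.rpow_le_rpow_of_exponent_le hx h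
        rwa [Real.rpow_zero] at this
      linarith
    · rw [abs_of_neg h, neg_neg]
      exact Real.rpow_le_rpow_of_nonpos (by linarith) hxy h.le
  have hW : ∀ p q : ℕ, 1 ≤ p → 1 ≤ q → w (p + q) ≤ φ (p + q) * (u p * u q) := by
    intro p q hp hq
    have hfp : (0:ℝ) < (p.factorial : ℝ) := by exact_mod_cast p.factorial_pos
    have hfq : (0:ℝ) < (q.factorial : ℝ) := by exact_mod_cast q.factorial_pos
    have hfact : (p.factorial : ℝ) * (q.factorial : ℝ) ≤ ((p+q).factorial : ℝ) := by
      have := Nat.le_of_dvd (p+q).factorial_pos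
        (Nat.factorial_mul_factorial_dvd_factorial_add p q)
      exact_mod_cast this
    have f1 : (((p+q).factorial : ℝ)) ^ σ ≤ (p.factorial : ℝ)^σ * (q.factorial : ℝ)^σ := by
      rw [← Real.mul_rpow hfp.le hfq.le]
      exact Real.rpow_le_rpow_of_nonpos (by positivity) hfact (by linarith)
    set N : ℝ := ((p+q:ℕ):ℝ) with hN
    have hN0 : (0:ℝ) < 1 + N := by positivity
    have hxN : (1:ℝ) ≤ 1 + N := le_add_of_nonneg_right (Nat.cast_nonneg _)
    have hxP : (1:ℝ) ≤ 1 + (p:ℝ) := le_add_of_nonneg_right (Nat.cast_nonneg p)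
    have hxQ : (1:ℝ) ≤ 1 + (q:ℝ) := le_add_of_nonneg_right (Nat.cast_nonneg q)
    have hPN : 1 + (p:ℝ) ≤ 1 + N := by
      rw [hN]; push_cast; linarith [Nat.cast_nonneg (α := ℝ) q]
    have hQN : 1 + (q:ℝ) ≤ 1 + N := by
      rw [hN]; push_cast; linarith [Nat.cast_nonneg (α := ℝ) p]
    have g1 : (1 + N) ^ (-|s'|) ≤ (1 + (p:ℝ)) ^ s' := haux _ _ hxP hPN
    have g2 : (1 + N) ^ (-|s'|) ≤ (1 + (q:ℝ)) ^ s' := haux _ _ hxQ hQN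
    have g3 : (1 + N) ^ s ≤ (1 + N) ^ |s| :=
      Real.rpow_le_rpow_of_exponent_le hxN (le_abs_self s)
    have e0 : (1+N)^(|s'|) * (1+N)^(-|s'|) = 1 := by
      rw [← Real.rpow_add hN0]; simp
    have g4 : (1:ℝ) ≤ (1+N)^(|s'|) * (1+(p:ℝ))^s' := by
      calc (1:ℝ) = (1+N)^(|s'|) * (1+N)^(-|s'|) := e0.symm
        _ ≤ (1+N)^(|s'|) * (1+(p:ℝ))^s' :=
            mul_le_mul_of_nonneg_left g1 (Real.rpow_nonneg hN0.le _)
    have g5 : (1:ℝ) ≤ (1+N)^(|s'|) * (1+(q:ℝ))^s' := by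
      calc (1:ℝ) = (1+N)^(|s'|) * (1+N)^(-|s'|) := e0.symm
        _ ≤ (1+N)^(|s'|) * (1+(q:ℝ))^s' :=
            mul_le_mul_of_nonneg_left g2 (Real.rpow_nonneg hN0.le _)
    have gM : (1 + N) ^ M = (1+N)^(|s|) * (((1+N)^(|s'|)) * ((1+N)^(|s'|))) := by
      rw [← Real.rpow_add hN0, ← Real.rpow_add hN0, hM]; ring_nf
    have f3 : (1 + N)^s ≤ (1+N)^M * ((1+(p:ℝ))^s' * (1+(q:ℝ))^s') := by
      have hnn : (0:ℝ) ≤ (1+N)^(|s|) := Real.rpow_nonneg hN0.le _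
      calc (1+N)^s ≤ (1+N)^(|s|) := g3
        _ = (1+N)^(|s|) * 1 * 1 := by ring
        _ ≤ (1+N)^(|s|) * ((1+N)^(|s'|) * (1+(p:ℝ))^s') * ((1+N)^(|s'|) * (1+(q:ℝ))^s') := by
            exact mul_le_mul (mul_le_mul_of_nonneg_left g4 hnn) g5 zero_le_one
              (mul_nonneg hnn (le_trans zero_le_one g4))
        _ = (1+N)^M * ((1+(p:ℝ))^s' * (1+(q:ℝ))^s') := by rw [gM]; ring
    have f2 : (2:ℝ) ^ (ρ * N) =
        (2:ℝ) ^ ((ρ - ρ') * N) * ((2:ℝ) ^ (ρ' * (p:ℝ)) * (2:ℝ) ^ (ρ' * (q:ℝ))) := by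
      rw [← Real.rpow_add two_pos, ← Real.rpow_add two_pos]
      congr 1
      rw [hN]; push_cast; ring
    show wgt σ ρ s (p+q) ≤ φ (p+q) * (wgt σ ρ' s' p * wgt σ ρ' s' q)
    simp only [wgt, hφ]
    calc (((p+q).factorial:ℝ))^σ * (2:ℝ)^(ρ * N) * (1+N)^s
        ≤ ((p.factorial:ℝ)^σ * (q.factorial:ℝ)^σ) * (2:ℝ)^(ρ * N) *
            ((1+N)^M * ((1+(p:ℝ))^s' * (1+(q:ℝ))^s')) := by
          refine mul_le_mul (mul_le_mul_of_nonneg_right f1 (Real.rpow_nonneg (by norm_num) _))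
            f3 (Real.rpow_nonneg hN0.le _) (by positivity)
      _ = (2:ℝ)^((ρ - ρ')*N) * (1+N)^M *
            ((p.factorial:ℝ)^σ * (2:ℝ)^(ρ'*(p:ℝ)) * (1+(p:ℝ))^s' *
             ((q.factorial:ℝ)^σ * (2:ℝ)^(ρ'*(q:ℝ)) * (1+(q:ℝ))^s')) := by
          rw [f2]; ring
  have hW2 : ∀ n : ℕ, 1 ≤ n → w n ≤ Φ * u n := by
    intro n _
    set N : ℝ := (n:ℝ) with hN
    have hN0 : (0:ℝ) < 1 + N := by positivity
    have hxN : (1:ℝ) ≤ 1 + N := le_add_of_nonneg_right (Nat.cast_nonneg _)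
    have g : (1+N)^s ≤ (1+N)^M * (1+N)^s' := by
      rw [← Real.rpow_add hN0]
      apply Real.rpow_le_rpow_of_exponent_le hxN
      rw [hM]
      have := le_abs_self s
      have := neg_abs_le s'
      have := abs_nonneg s'
      linarith
    have step1 : w n ≤ φ n * u n := by
      show wgt σ ρ s n ≤ φ n * wgt σ ρ' s' n
      simp only [wgt, hφ]
      calc ((n.factorial:ℝ))^σ * (2:ℝ)^(ρ * N) * (1+N)^s
          ≤ ((n.factorial:ℝ))^σ * (2:ℝ)^(ρ * N) * ((1+N)^M * (1+N)^s') := by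
            apply mul_le_mul_of_nonneg_left g
            have hf : (0:ℝ) < (n.factorial : ℝ) := by exact_mod_cast n.factorial_pos
            positivity
        _ = (2:ℝ)^((ρ-ρ')*N) * (1+N)^M * (((n.factorial:ℝ))^σ * (2:ℝ)^(ρ'*N) * (1+N)^s') := by
            rw [show ρ * N = (ρ-ρ')*N + ρ'*N by ring, Real.rpow_add two_pos]
            ring
    calc w n ≤ φ n * u n := step1
      _ ≤ Φ * u n := mul_le_mul_of_nonneg_right (hφleΦ n) (hupos n).le
  refine ⟨Real.sqrt (1 + 3 * Φ), Real.sqrt_pos.2 (by linarith), ?_⟩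
  rintro a₀ a ⟨Na, ha⟩ b₀ b ⟨Nb, hb⟩
  set c : ∀ n, E n := gradedMul mul a₀ a b₀ b with hc
  set A2 : ℝ := ∑' n, u (n+1) * ‖a (n+1)‖^2 with hA2
  set B2 : ℝ := ∑' n, u (n+1) * ‖b (n+1)‖^2 with hB2
  have hSa : Summable (fun n => u (n+1) * ‖a (n+1)‖^2) := by
    apply summable_of_ne_finset_zero (s := Finset.range Na)
    intro n hn
    rw [ha (n+1) (by simp at hn; omega)]
    simp
  have hSb : Summable (fun n => u (n+1) * ‖b (n+1)‖^2) := by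
    apply summable_of_ne_finset_zero (s := Finset.range Nb)
    intro n hn
    rw [hb (n+1) (by simp at hn; omega)]
    simp
  have hA2nn : 0 ≤ A2 := tsum_nonneg (fun n => mul_nonneg (hupos _).le (by positivity))
  have hB2nn : 0 ≤ B2 := tsum_nonneg (fun n => mul_nonneg (hupos _).le (by positivity))
  have hA2le : a₀^2 + A2 ≤ (wnorm u a₀ a)^2 := by
    rw [wnorm, Real.sq_sqrt (by positivity)]
  -- c vanishes for large n
  have hczero : ∀ n, Na + Nb ≤ n → c n = 0 := by
    intro n hn
    have hbn : b n = 0 := hb n (by omega)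
    have han : a n = 0 := ha n (by omega)
    rw [hc]
    unfold gradedMul
    rw [hbn, han, smul_zero, smul_zero, zero_add, zero_add]
    apply Finset.sum_eq_zero
    intro p hp
    simp only [Finset.mem_Ioo] at hp
    have hpn : p + (n - p) = n := by omega
    rw [dif_pos hpn]
    rcases le_or_gt Na p with h1 | h1
    · rw [ha p h1]
      rw [map_zero]
      simp [cast_zero_eq' hpn]
    · rw [hb (n - p) (by omega)]
      rw [map_zero]
      simp [cast_zero_eq' hpn]
  -- pointwise norm bound
  have hS : ∀ m : ℕ, 1 ≤ m →
      ‖c m‖ ≤ |a₀| * ‖b m‖ + |b₀| * ‖a m‖ + ∑ p ∈ Finset.Ioo 0 m, ‖a p‖ * ‖b (m - p)‖ := by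
    intro m hm1
    rw [hc]
    unfold gradedMul
    refine le_trans (norm_add_le _ _) (add_le_add ?_ ?_)
    · refine le_trans (norm_add_le _ _) ?_
      simp [norm_smul, Real.norm_eq_abs]
    · refine le_trans (norm_sum_le _ _) ?_
      apply Finset.sum_le_sum
      intro p hp
      simp only [Finset.mem_Ioo] at hp
      have hpm : p + (m - p) = m := by omega
      rw [dif_pos hpm, cast_norm_eq' hpm]
      exact hmul p (m-p) hp.1 (by omega) _ _
  -- partial-sum bounds
  have hpartA : ∀ m : ℕ, ∑ p ∈ Finset.Ioo 0 m, u p * ‖a p‖^2 ≤ A2 := by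
    intro m
    have e : Finset.Ioo 0 m = Finset.Ico 1 m := by
      ext x; simp [Finset.mem_Ioo, Finset.mem_Ico]; omega
    rw [e, Finset.sum_Ico_eq_sum_range]
    calc ∑ i ∈ Finset.range (m-1), u (1+i) * ‖a (1+i)‖^2
        = ∑ i ∈ Finset.range (m-1), u (i+1) * ‖a (i+1)‖^2 := by
          apply Finset.sum_congr rfl; intro i _; rw [add_comm]
      _ ≤ A2 := Summable.sum_le_tsum _ (fun i _ => mul_nonneg (hupos _).le (by positivity)) hSa
  have hpartB : ∀ m : ℕ, ∑ p ∈ Finset.Ioo 0 m, u (m - p) * ‖b (m - p)‖^2 ≤ B2 := by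
    intro m
    have e : ∑ p ∈ Finset.Ioo 0 m, u (m-p) * ‖b (m-p)‖^2
        = ∑ q ∈ Finset.Ioo 0 m, u q * ‖b q‖^2 := by
      refine Finset.sum_nbij' (i := fun p => m - p) (j := fun q => m - q)
        ?_ ?_ ?_ ?_ ?_ <;> intro x hx <;> simp only [Finset.mem_Ioo] at hx ⊢ <;>
        first | rfl | omega
    rw [e]
    have e2 : Finset.Ioo 0 m = Finset.Ico 1 m := by
      ext x; simp [Finset.mem_Ioo, Finset.mem_Ico]; omega
    rw [e2, Finset.sum_Ico_eq_sum_range]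
    calc ∑ i ∈ Finset.range (m-1), u (1+i) * ‖b (1+i)‖^2
        = ∑ i ∈ Finset.range (m-1), u (i+1) * ‖b (i+1)‖^2 := by
          apply Finset.sum_congr rfl; intro i _; rw [add_comm]
      _ ≤ B2 := Summable.sum_le_tsum _ (fun i _ => mul_nonneg (hupos _).le (by positivity)) hSb
  -- main pointwise bound
  have hpt : ∀ n : ℕ, w (n+1) * ‖c (n+1)‖^2 ≤
      3 * Φ * (a₀^2 * (u (n+1) * ‖b (n+1)‖^2)) +
      (3 * Φ * (b₀^2 * (u (n+1) * ‖a (n+1)‖^2)) + 3 * (A2 * B2) * φ (n+1)) := by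
    intro n
    set m := n + 1 with hmdef
    have hm1 : 1 ≤ m := by omega
    set S := ∑ p ∈ Finset.Ioo 0 m, ‖a p‖ * ‖b (m-p)‖ with hSdef
    have hSnn : 0 ≤ S := Finset.sum_nonneg (fun p _ => by positivity)
    have h1 : ‖c m‖ ≤ |a₀| * ‖b m‖ + |b₀| * ‖a m‖ + S := hS m hm1
    have h2 : ‖c m‖^2 ≤ (|a₀| * ‖b m‖ + |b₀| * ‖a m‖ + S)^2 :=
      pow_le_pow_left₀ (norm_nonneg _) h1 2
    have h3 : (|a₀| * ‖b m‖ + |b₀| * ‖a m‖ + S)^2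
        ≤ 3 * ((|a₀| * ‖b m‖)^2 + (|b₀| * ‖a m‖)^2 + S^2) := by
      nlinarith [sq_nonneg (|a₀| * ‖b m‖ - |b₀| * ‖a m‖), sq_nonneg (|a₀| * ‖b m‖ - S),
        sq_nonneg (|b₀| * ‖a m‖ - S)]
    have hwm := (hwpos m).le
    have key1 : w m * (|a₀| * ‖b m‖)^2 ≤ Φ * (a₀^2 * (u m * ‖b m‖^2)) := by
      have h := mul_le_mul_of_nonneg_right (hW2 m hm1)
        (mul_nonneg (sq_nonneg a₀) (sq_nonneg ‖b m‖))
      calc w m * (|a₀| * ‖b m‖)^2 = w m * (a₀^2 * ‖b m‖^2) := by rw [mul_pow, sq_abs]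
        _ ≤ (Φ * u m) * (a₀^2 * ‖b m‖^2) := h
        _ = Φ * (a₀^2 * (u m * ‖b m‖^2)) := by ring
    have key2 : w m * (|b₀| * ‖a m‖)^2 ≤ Φ * (b₀^2 * (u m * ‖a m‖^2)) := by
      have h := mul_le_mul_of_nonneg_right (hW2 m hm1)
        (mul_nonneg (sq_nonneg b₀) (sq_nonneg ‖a m‖))
      calc w m * (|b₀| * ‖a m‖)^2 = w m * (b₀^2 * ‖a m‖^2) := by rw [mul_pow, sq_abs]
        _ ≤ (Φ * u m) * (b₀^2 * ‖a m‖^2) := h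
        _ = Φ * (b₀^2 * (u m * ‖a m‖^2)) := by ring
    have key3 : w m * S^2 ≤ φ m * (A2 * B2) := by
      have hsq : Real.sqrt (w m) * S ≤ Real.sqrt (φ m) * Real.sqrt (A2 * B2) := by
        rw [hSdef, Finset.mul_sum]
        calc ∑ p ∈ Finset.Ioo 0 m, Real.sqrt (w m) * (‖a p‖ * ‖b (m-p)‖)
            ≤ ∑ p ∈ Finset.Ioo 0 m, Real.sqrt (φ m) *
                ((Real.sqrt (u p) * ‖a p‖) * (Real.sqrt (u (m-p)) * ‖b (m-p)‖)) := by
              apply Finset.sum_le_sum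
              intro p hp
              simp only [Finset.mem_Ioo] at hp
              have hpm : p + (m - p) = m := by omega
              have hwle : w m ≤ φ m * (u p * u (m-p)) := by
                have := hW p (m-p) hp.1 (by omega)
                rwa [hpm] at this
              have hsle : Real.sqrt (w m) ≤
                  Real.sqrt (φ m) * (Real.sqrt (u p) * Real.sqrt (u (m-p))) := by
                rw [← Real.sqrt_mul (hupos p).le, ← Real.sqrt_mul (hφpos m).le]
                exact Real.sqrt_le_sqrt hwle
              calc Real.sqrt (w m) * (‖a p‖ * ‖b (m-p)‖)
                  ≤ (Real.sqrt (φ m) * (Real.sqrt (u p) * Real.sqrt (u (m-p)))) *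
                      (‖a p‖ * ‖b (m-p)‖) :=
                    mul_le_mul_of_nonneg_right hsle (by positivity)
                _ = Real.sqrt (φ m) *
                      ((Real.sqrt (u p) * ‖a p‖) * (Real.sqrt (u (m-p)) * ‖b (m-p)‖)) := by
                    ring
          _ = Real.sqrt (φ m) * ∑ p ∈ Finset.Ioo 0 m,
                (Real.sqrt (u p) * ‖a p‖) * (Real.sqrt (u (m-p)) * ‖b (m-p)‖) := by
              rw [Finset.mul_sum]
          _ ≤ Real.sqrt (φ m) * Real.sqrt (A2 * B2) := by
              refine mul_le_mul_of_nonneg_left ?_ (Real.sqrt_nonneg _)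
              rw [Real.le_sqrt (Finset.sum_nonneg fun p _ => by positivity)
                (mul_nonneg hA2nn hB2nn)]
              calc (∑ p ∈ Finset.Ioo 0 m,
                      (Real.sqrt (u p) * ‖a p‖) * (Real.sqrt (u (m-p)) * ‖b (m-p)‖))^2
                  ≤ (∑ p ∈ Finset.Ioo 0 m, (Real.sqrt (u p) * ‖a p‖)^2) *
                      ∑ p ∈ Finset.Ioo 0 m, (Real.sqrt (u (m-p)) * ‖b (m-p)‖)^2 :=
                    Finset.sum_mul_sq_le_sq_mul_sq _ _ _
                _ ≤ A2 * B2 := by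
                    have ea : ∀ p, (Real.sqrt (u p) * ‖a p‖)^2 = u p * ‖a p‖^2 := fun p => by
                      rw [mul_pow, Real.sq_sqrt (hupos p).le]
                    have eb : ∀ p, (Real.sqrt (u (m-p)) * ‖b (m-p)‖)^2
                        = u (m-p) * ‖b (m-p)‖^2 := fun p => by
                      rw [mul_pow, Real.sq_sqrt (hupos _).le]
                    simp only [ea, eb]
                    exact mul_le_mul (hpartA m) (hpartB m)
                      (Finset.sum_nonneg fun p _ => mul_nonneg (hupos _).le (by positivity))
                      hA2nn
      have hsq2 : (Real.sqrt (w m) * S)^2 ≤ (Real.sqrt (φ m) * Real.sqrt (A2*B2))^2 :=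
        pow_le_pow_left₀ (by positivity) hsq 2
      calc w m * S^2 = (Real.sqrt (w m) * S)^2 := by rw [mul_pow, Real.sq_sqrt hwm]
        _ ≤ (Real.sqrt (φ m) * Real.sqrt (A2*B2))^2 := hsq2
        _ = φ m * (A2 * B2) := by
            rw [mul_pow, Real.sq_sqrt (hφpos m).le, Real.sq_sqrt (mul_nonneg hA2nn hB2nn)]
    calc w m * ‖c m‖^2
        ≤ w m * (3 * ((|a₀| * ‖b m‖)^2 + (|b₀| * ‖a m‖)^2 + S^2)) :=
          mul_le_mul_of_nonneg_left (le_trans h2 h3) hwm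
      _ = 3 * (w m * (|a₀| * ‖b m‖)^2) + (3 * (w m * (|b₀| * ‖a m‖)^2)
            + 3 * (w m * S^2)) := by ring
      _ ≤ 3 * (Φ * (a₀^2 * (u m * ‖b m‖^2))) + (3 * (Φ * (b₀^2 * (u m * ‖a m‖^2)))
            + 3 * (φ m * (A2*B2))) := by
          refine add_le_add (by linarith) (add_le_add (by linarith) (by linarith))
      _ = 3 * Φ * (a₀^2 * (u m * ‖b m‖^2)) +
          (3 * Φ * (b₀^2 * (u m * ‖a m‖^2)) + 3 * (A2 * B2) * φ m) := by ring
  -- sum up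
  have hT : (∑' n, w (n+1) * ‖c (n+1)‖^2) ≤
      3 * Φ * (a₀^2 * B2) + (3 * Φ * (b₀^2 * A2) + 3 * (A2 * B2) * Φ) := by
    have hSc : Summable (fun n => w (n+1) * ‖c (n+1)‖^2) := by
      apply summable_of_ne_finset_zero (s := Finset.range (Na + Nb))
      intro n hn
      rw [hczero (n+1) (by simp at hn; omega)]
      simp
    have hSφ : Summable (fun n => φ (n+1)) := (summable_nat_add_iff 1).2 hφsum
    have h1 : Summable (fun n => 3 * Φ * (a₀^2 * (u (n+1) * ‖b (n+1)‖^2))) :=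
      ((hSb.mul_left _).mul_left _)
    have h2 : Summable (fun n => 3 * Φ * (b₀^2 * (u (n+1) * ‖a (n+1)‖^2))) :=
      ((hSa.mul_left _).mul_left _)
    have h3 : Summable (fun n => 3 * (A2 * B2) * φ (n+1)) := hSφ.mul_left _
    calc (∑' n, w (n+1) * ‖c (n+1)‖^2)
        ≤ ∑' n, (3 * Φ * (a₀^2 * (u (n+1) * ‖b (n+1)‖^2)) +
            (3 * Φ * (b₀^2 * (u (n+1) * ‖a (n+1)‖^2)) + 3 * (A2 * B2) * φ (n+1))) :=
          Summable.tsum_le_tsum hpt hSc (h1.add (h2.add h3))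
      _ = (∑' n, 3 * Φ * (a₀^2 * (u (n+1) * ‖b (n+1)‖^2))) +
            ((∑' n, 3 * Φ * (b₀^2 * (u (n+1) * ‖a (n+1)‖^2))) +
             (∑' n, 3 * (A2 * B2) * φ (n+1))) := by
          rw [Summable.tsum_add h1 (h2.add h3), Summable.tsum_add h2 h3]
      _ ≤ 3 * Φ * (a₀^2 * B2) + (3 * Φ * (b₀^2 * A2) + 3 * (A2 * B2) * Φ) := by
          gcongr ?_ + (?_ + ?_)
          · rw [tsum_mul_left, tsum_mul_left]
          · rw [tsum_mul_left, tsum_mul_left]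
          · rw [tsum_mul_left]
            have : (∑' n, φ (n+1)) ≤ Φ := by
              apply Summable.tsum_le_tsum_of_inj (fun n => n + 1)
                (fun x y h => by simpa using h) (fun c _ => (hφpos c).le) (fun n => le_rfl) hSφ hφsum
            have h0 : 0 ≤ 3 * (A2 * B2) := by positivity
            exact mul_le_mul_of_nonneg_left this h0
  -- finish
  rw [wnorm, wnorm, wnorm]
  have harg : (a₀ * b₀)^2 + (∑' n, w (n+1) * ‖c (n+1)‖^2) ≤
      (1 + 3 * Φ) * ((a₀^2 + A2) * (b₀^2 + B2)) := by
    have := hT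
    nlinarith [sq_nonneg a₀, sq_nonneg b₀, hA2nn, hB2nn, hΦpos,
      mul_nonneg hA2nn hB2nn, mul_nonneg (sq_nonneg a₀) hB2nn,
      mul_nonneg (sq_nonneg b₀) hA2nn, mul_nonneg (sq_nonneg a₀) (sq_nonneg b₀)]
  calc Real.sqrt ((a₀ * b₀)^2 + ∑' n, w (n+1) * ‖c (n+1)‖^2)
      ≤ Real.sqrt ((1 + 3 * Φ) * ((a₀^2 + A2) * (b₀^2 + B2))) := Real.sqrt_le_sqrt harg
    _ = Real.sqrt (1 + 3 * Φ) * Real.sqrt (a₀^2 + A2) * Real.sqrt (b₀^2 + B2) := by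
        rw [Real.sqrt_mul (by linarith), Real.sqrt_mul (by positivity), mul_assoc]
    _ = _ := rfl
end
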